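/- arXiv:1303.4485 — 5 statements merged into one kernel-verified Lean document; each statement's English description precedes it below -/
import Mathlib

section
/- Fix c ∈ ℝ and n ∈ ℤ, and let a: ℝ → ℂ be a nonzero solution of the ODE a'(r) = 2π(n − ρ(r))·a(r), where ρ: ℝ → ℝ is a smooth nondecreasing function with ρ(r) = m − 1/2 for r < m − 1/2 and ρ(r) = m + 1/2 for r > m + 1/2 (m an integer). Then a ∈ L²(ℝ) if and only if n = m. -/
open Real MeasureTheory Set

lemma exp_mul_integrableOn_Iic {b : ℝ} (hb : 0 < b) (c : ℝ) :
    IntegrableOn (fun x => Real.exp (b * x)) (Iic c) := by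
  rw [integrableOn_Iic_iff_integrableOn_Iio]
  have h := (MeasurePreserving.integrableOn_comp_preimage
      (Measure.measurePreserving_neg (volume : Measure ℝ))
      (Homeomorph.neg ℝ).measurableEmbedding).2 (exp_neg_integrableOn_Ioi (-c) hb)
  have hs : (Neg.neg ⁻¹' Ioi (-c) : Set ℝ) = Iio c := by ext x; simp
  rw [hs] at h
  refine h.congr_fun ?_ measurableSet_Iio
  intro x _
  simp [Function.comp]

/-- A nonzero solution of a'(r) = 2π(n − ρ(r))a(r), with ρ nondecreasing and
equal to m ∓ 1/2 near ∓∞, is square-integrable on ℝ iff n = m. -/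
theorem stmt1 (m n : ℤ) (ρ : ℝ → ℝ) (hρsm : ContDiff ℝ (⊤ : ℕ∞) ρ) (hρmono : Monotone ρ)
    (hρneg : ∀ r : ℝ, r < (m : ℝ) - 1/2 → ρ r = (m : ℝ) - 1/2)
    (hρpos : ∀ r : ℝ, (m : ℝ) + 1/2 < r → ρ r = (m : ℝ) + 1/2)
    (a : ℝ → ℂ) (hd : Differentiable ℝ a) (ha0 : a ≠ 0)
    (hode : ∀ r, deriv a r = ((2 * π * ((n : ℝ) - ρ r) : ℝ) : ℂ) * a r) :
    Integrable (fun r => ‖a r‖ ^ 2) ↔ n = m := by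
  have hρc : Continuous ρ := hρsm.continuous
  set cm : ℝ := (m : ℝ) - 1/2 with hcm
  set cp : ℝ := (m : ℝ) + 1/2 with hcp
  -- endpoint values of ρ by continuity
  have hρcp : ρ cp = cp := by
    have h1 : Filter.Tendsto ρ (nhdsWithin cp (Ioi cp)) (nhds (ρ cp)) :=
      (hρc.tendsto cp).mono_left nhdsWithin_le_nhds
    have h2 : Filter.Tendsto ρ (nhdsWithin cp (Ioi cp)) (nhds cp) := by
      refine Filter.Tendsto.congr' ?_ tendsto_const_nhds
      filter_upwards [self_mem_nhdsWithin] with x hx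
      exact (hρpos x hx).symm
    exact tendsto_nhds_unique h1 h2
  have hρcm : ρ cm = cm := by
    have h1 : Filter.Tendsto ρ (nhdsWithin cm (Iio cm)) (nhds (ρ cm)) :=
      (hρc.tendsto cm).mono_left nhdsWithin_le_nhds
    have h2 : Filter.Tendsto ρ (nhdsWithin cm (Iio cm)) (nhds cm) := by
      refine Filter.Tendsto.congr' ?_ tendsto_const_nhds
      filter_upwards [self_mem_nhdsWithin] with x hx
      exact (hρneg x hx).symm
    exact tendsto_nhds_unique h1 h2
  -- the antiderivative F
  set φ : ℝ → ℝ := fun u => 2 * π * ((n : ℝ) - ρ u) with hφ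
  have hφc : Continuous φ := by fun_prop
  set F : ℝ → ℝ := fun r => ∫ u in (0:ℝ)..r, φ u with hF
  have hFd : ∀ r, HasDerivAt F (φ r) r := fun r =>
    (hφc.integral_hasStrictDerivAt 0 r).hasDerivAt
  have hF0 : F 0 = 0 := intervalIntegral.integral_same
  -- solve the ODE
  have key : ∀ r, a r = a 0 * Complex.exp ((F r : ℂ)) := by
    set g : ℝ → ℂ := fun r => a r * Complex.exp (-(F r : ℂ)) with hg
    have hgd : ∀ r, HasDerivAt g 0 r := by
      intro r
      have h1 : HasDerivAt a (deriv a r) r := (hd r).hasDerivAt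
      have h2 := ((hFd r).ofReal_comp.neg).cexp
      have h3 := h1.mul h2
      rw [hode r] at h3
      refine (h3.congr_deriv ?_ : HasDerivAt g 0 r)
      show ((2 * π * ((n : ℝ) - ρ r) : ℝ) : ℂ) * a r * Complex.exp (-(F r : ℂ)) + a r * (Complex.exp (-(F r : ℂ)) * -((2 * π * ((n : ℝ) - ρ r) : ℝ) : ℂ)) = 0
      push_cast
      ring
    have hgdiff : Differentiable ℝ g := fun r => (hgd r).differentiableAt
    have hgz : ∀ r, deriv g r = 0 := fun r => (hgd r).deriv
    intro r
    have h := is_const_of_deriv_eq_zero hgdiff hgz r 0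
    simp only [hg, hF0, Complex.ofReal_zero, neg_zero, Complex.exp_zero, mul_one] at h
    calc a r = a r * Complex.exp (-(F r : ℂ)) * Complex.exp ((F r : ℂ)) := by
          rw [mul_assoc, ← Complex.exp_add]; simp
      _ = a 0 * Complex.exp ((F r : ℂ)) := by rw [h]
  -- the norm formula
  have hnorm : ∀ r, ‖a r‖ ^ 2 = ‖a 0‖ ^ 2 * Real.exp (2 * F r) := by
    intro r
    rw [key r, norm_mul, mul_pow]
    congr 1
    rw [Complex.norm_exp, Complex.ofReal_re,
      show (2:ℝ) * F r = (2:ℕ) * F r by push_cast; ring, Real.exp_nat_mul]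
  -- a 0 ≠ 0
  have ha00 : a 0 ≠ 0 := by
    intro h
    apply ha0
    funext r
    rw [key r, h, zero_mul]; rfl
  have hB : (0:ℝ) < ‖a 0‖ ^ 2 := pow_pos (norm_pos_iff.mpr ha00) 2
  -- exact formula for F on the tails
  have hintφ : ∀ x y : ℝ, IntervalIntegrable φ volume x y := fun x y =>
    hφc.intervalIntegrable x y
  have hFright : ∀ r, cp ≤ r → F r = F cp + 2 * π * ((n : ℝ) - cp) * (r - cp) := by
    intro r hr
    have hsplit : F cp + ∫ u in cp..r, φ u = F r :=
      intervalIntegral.integral_add_adjacent_intervals (hintφ 0 cp) (hintφ cp r)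
    have hcongr : (∫ u in cp..r, φ u) = ∫ u in cp..r, 2 * π * ((n : ℝ) - cp) := by
      refine intervalIntegral.integral_congr ?_
      intro u hu
      rw [uIcc_of_le hr] at hu
      rcases eq_or_lt_of_le hu.1 with h | h
      · simp [hφ, ← h, hρcp]
      · simp [hφ, hρpos u h]
    rw [← hsplit, hcongr, intervalIntegral.integral_const]
    simp [smul_eq_mul]; ring
  have hFleft : ∀ r, r ≤ cm → F r = F cm + 2 * π * ((n : ℝ) - cm) * (r - cm) := by
    intro r hr
    have hsplit : F r + ∫ u in r..cm, φ u = F cm :=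
      intervalIntegral.integral_add_adjacent_intervals (hintφ 0 r) (hintφ r cm)
    have hcongr : (∫ u in r..cm, φ u) = ∫ u in r..cm, 2 * π * ((n : ℝ) - cm) := by
      refine intervalIntegral.integral_congr ?_
      intro u hu
      rw [uIcc_of_le hr] at hu
      rcases eq_or_lt_of_le hu.2 with h | h
      · simp [hφ, h, hρcm]
      · simp [hφ, hρneg u h]
    have : F r = F cm - ∫ u in r..cm, φ u := by linarith
    rw [this, hcongr, intervalIntegral.integral_const]
    simp [smul_eq_mul]; ring
  constructor
  · -- Integrable → n = m
    intro hInt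
    by_contra hne
    have hπ : (0:ℝ) < π := Real.pi_pos
    rcases lt_or_gt_of_ne hne with hlt | hgt
    · -- n < m : no decay at -∞
      have hK : (0:ℝ) ≤ -(2 * π * ((n : ℝ) - cm)) := by
        have : (n : ℝ) ≤ (m : ℝ) - 1 := by exact_mod_cast Int.le_sub_one_iff.mpr hlt
        rw [hcm]; nlinarith
      have hge : ∀ r ∈ Iic cm, ‖a 0‖ ^ 2 * Real.exp (2 * F cm) ≤ ‖a r‖ ^ 2 := by
        intro r hr
        rw [hnorm r, hFleft r hr]
        have : 2 * F cm ≤ 2 * (F cm + 2 * π * ((n : ℝ) - cm) * (r - cm)) := by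
          have h1 : r - cm ≤ 0 := by simpa using hr
          nlinarith
        exact mul_le_mul_of_nonneg_left (Real.exp_le_exp.2 this) hB.le
      have hconst : IntegrableOn (fun _ : ℝ => ‖a 0‖ ^ 2 * Real.exp (2 * F cm))
          (Iic cm) := by
        refine Integrable.mono' hInt.integrableOn aestronglyMeasurable_const ?_
        rw [ae_restrict_iff' measurableSet_Iic]
        filter_upwards with r hr
        rw [Real.norm_eq_abs, abs_of_nonneg (by positivity)]
        exact hge r hr
      rcases integrable_const_iff.mp hconst with h | h
      · exact absurd h (by positivity)
      · rw [isFiniteMeasure_restrict, Real.volume_Iic] at h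
        exact absurd h (by simp)
    · -- m < n : no decay at +∞
      have hK : (0:ℝ) ≤ 2 * π * ((n : ℝ) - cp) := by
        have : (m : ℝ) + 1 ≤ (n : ℝ) := by exact_mod_cast Int.add_one_le_iff.mpr hgt
        rw [hcp]; nlinarith
      have hge : ∀ r ∈ Ioi cp, ‖a 0‖ ^ 2 * Real.exp (2 * F cp) ≤ ‖a r‖ ^ 2 := by
        intro r hr
        rw [hnorm r, hFright r (le_of_lt hr)]
        have : 2 * F cp ≤ 2 * (F cp + 2 * π * ((n : ℝ) - cp) * (r - cp)) := by
          have h1 : (0:ℝ) ≤ r - cp := by simp at hr; linarith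
          nlinarith
        exact mul_le_mul_of_nonneg_left (Real.exp_le_exp.2 this) hB.le
      have hconst : IntegrableOn (fun _ : ℝ => ‖a 0‖ ^ 2 * Real.exp (2 * F cp))
          (Ioi cp) := by
        refine Integrable.mono' hInt.integrableOn aestronglyMeasurable_const ?_
        rw [ae_restrict_iff' measurableSet_Ioi]
        filter_upwards with r hr
        rw [Real.norm_eq_abs, abs_of_nonneg (by positivity)]
        exact hge r hr
      rcases integrable_const_iff.mp hconst with h | h
      · exact absurd h (by positivity)
      · rw [isFiniteMeasure_restrict, Real.volume_Ioi] at h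
        exact absurd h (by simp)
  · -- n = m → Integrable
    intro hnm
    subst hnm
    have hπ : (0:ℝ) < π := Real.pi_pos
    have h2π : (0:ℝ) < 2 * π := by linarith
    -- right tail
    have hright : IntegrableOn (fun r => ‖a r‖ ^ 2) (Ioi cp) := by
      have hbase : IntegrableOn
          (fun r => (‖a 0‖ ^ 2 * Real.exp (2 * F cp + 2 * π * cp)) * Real.exp (-(2 * π) * r))
          (Ioi cp) := (exp_neg_integrableOn_Ioi cp h2π).const_mul _
      refine hbase.congr_fun ?_ measurableSet_Ioi
      intro r hr
      symm
      simp only [hnorm r, hFright r (le_of_lt hr), mul_assoc, ← Real.exp_add]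
      congr 2
      rw [hcp]
      push_cast
      ring
    -- left tail
    have hleft : IntegrableOn (fun r => ‖a r‖ ^ 2) (Iic cm) := by
      have hbase : IntegrableOn
          (fun r => (‖a 0‖ ^ 2 * Real.exp (2 * F cm - 2 * π * cm)) * Real.exp ((2 * π) * r))
          (Iic cm) := (exp_mul_integrableOn_Iic h2π cm).const_mul _
      refine hbase.congr_fun ?_ measurableSet_Iic
      intro r hr
      symm
      simp only [hnorm r, hFleft r hr, mul_assoc, ← Real.exp_add]
      congr 2
      rw [hcm]
      push_cast
      ring
    -- middle
    have hmid : IntegrableOn (fun r => ‖a r‖ ^ 2) (Icc cm cp) := by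
      have : Continuous fun r => ‖a r‖ ^ 2 := by have := hd.continuous; fun_prop
      exact this.integrableOn_Icc
    have hunion : IntegrableOn (fun r => ‖a r‖ ^ 2) (Iic cm ∪ (Icc cm cp ∪ Ioi cp)) :=
      hleft.union (hmid.union hright)
    have hcover : (Iic cm ∪ (Icc cm cp ∪ Ioi cp) : Set ℝ) = univ := by
      ext x
      simp only [mem_union, mem_Iic, mem_Icc, mem_Ioi, mem_univ, iff_true]
      rcases le_or_gt x cm with h | h
      · exact Or.inl h
      rcases le_or_gt x cp with h2 | h2
      · exact Or.inr (Or.inl ⟨h.le, h2⟩)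
      · exact Or.inr (Or.inr h2)
    rw [hcover] at hunion
    exact integrableOn_univ.mp hunion
end

section
/- Fix integers m and n, real numbers t > 0, ε₁ > 0, and let a: ℝ → ℂ be a nonzero solution of a'(r) = 2π(1 + t·f(r)^{ε₁})(n − ρ(r))·a(r), where f(r) = |r| for |r − m| > 1/2, f > 0 everywhere smooth, and ρ is smooth nondecreasing with ρ = m ± 1/2 for ±(r − m) > 1/2. Then a ∈ L²(ℝ) if and only if n = m. -/
open Real MeasureTheory Set

/-- A nonzero solution of a'(r) = 2π(1 + t f(r)^{ε₁})(n − ρ(r))a(r) on the cylinder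
setup (orbit-direction perturbation) is square-integrable iff n = m. -/
theorem stmt2 (m n : ℤ) (t ε₁ : ℝ) (ht : 0 < t) (he : 0 < ε₁)
    (ρ f : ℝ → ℝ) (hρsm : ContDiff ℝ (⊤ : ℕ∞) ρ) (hρmono : Monotone ρ)
    (hρneg : ∀ r : ℝ, r < (m : ℝ) - 1/2 → ρ r = (m : ℝ) - 1/2)
    (hρpos : ∀ r : ℝ, (m : ℝ) + 1/2 < r → ρ r = (m : ℝ) + 1/2)
    (hfsm : ContDiff ℝ (⊤ : ℕ∞) f) (hfpos : ∀ r, 0 < f r)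
    (hf : ∀ r : ℝ, 1/2 < |r - (m : ℝ)| → f r = |r|)
    (a : ℝ → ℂ) (hd : Differentiable ℝ a) (ha0 : a ≠ 0)
    (hode : ∀ r, deriv a r =
      ((2 * π * (1 + t * f r ^ ε₁) * ((n : ℝ) - ρ r) : ℝ) : ℂ) * a r) :
    Integrable (fun r => ‖a r‖ ^ 2) ↔ n = m := by
  set g : ℝ → ℝ := fun r => 2 * π * (1 + t * f r ^ ε₁) * ((n : ℝ) - ρ r) with hg_def
  have hgcont : Continuous g := by
    have h1 : Continuous fun r => f r ^ ε₁ :=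
      hfsm.continuous.rpow_const (fun x => Or.inr he.le)
    exact (continuous_const.mul ((continuous_const.add (continuous_const.mul h1)))).mul
      (continuous_const.sub hρsm.continuous)
  set G : ℝ → ℝ := fun r => ∫ s in (0:ℝ)..r, g s with hG_def
  have hGd : ∀ r, HasDerivAt G (g r) r := fun r =>
    intervalIntegral.integral_hasDerivAt_right (hgcont.intervalIntegrable _ _)
      (hgcont.stronglyMeasurableAtFilter _ _) hgcont.continuousAt
  have hGc : Continuous G := continuous_iff_continuousAt.2 fun r => (hGd r).continuousAt
  have hGsplit : ∀ x r : ℝ, G r = G x + ∫ s in x..r, g s := by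
    intro x r
    rw [hG_def]
    simp only
    rw [intervalIntegral.integral_add_adjacent_intervals (hgcont.intervalIntegrable _ _)
      (hgcont.intervalIntegrable _ _)]
  -- the explicit formula
  have key : ∀ r, a r = a 0 * Complex.exp (G r) := by
    have hF : ∀ r, HasDerivAt (fun r => a r * Complex.exp (-(G r : ℂ))) 0 r := by
      intro r
      have hE : HasDerivAt (fun r => Complex.exp (-(G r : ℂ)))
          (Complex.exp (-(G r : ℂ)) * (-(g r : ℂ))) r := ((hGd r).ofReal_comp.neg).cexp
      have hode' : deriv a r = ((g r : ℝ) : ℂ) * a r := hode r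
      have := ((hd r).hasDerivAt.mul hE)
      rw [hode'] at this
      refine this.congr_deriv ?_
      ring
    have hconst : ∀ r, (fun r => a r * Complex.exp (-(G r : ℂ))) r
        = (fun r => a r * Complex.exp (-(G r : ℂ))) 0 :=
      fun r => is_const_of_deriv_eq_zero (fun x => (hF x).differentiableAt)
        (fun x => (hF x).deriv) r 0
    intro r
    have h0 : G 0 = 0 := by simp [hG_def]
    have := hconst r
    simp only [h0] at this
    simp only [Complex.ofReal_zero, neg_zero, Complex.exp_zero, mul_one] at this
    calc a r = a r * Complex.exp (-(G r : ℂ)) * Complex.exp (G r) := by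
          rw [mul_assoc, ← Complex.exp_add]; simp
      _ = a 0 * Complex.exp (G r) := by rw [this]
  have ha00 : a 0 ≠ 0 := by
    intro h
    apply ha0
    funext r
    simp only [Pi.zero_apply]
    rw [key r, h, zero_mul]
  have hnorm : ∀ r, ‖a r‖ ^ 2 = ‖a 0‖ ^ 2 * Real.exp (2 * G r) := by
    intro r
    rw [key r, norm_mul, mul_pow]
    congr 1
    rw [Complex.norm_exp, Complex.ofReal_re, sq, ← Real.exp_add, two_mul]
  have hiff : Integrable (fun r => ‖a r‖ ^ 2) ↔ Integrable (fun r => Real.exp (2 * G r)) := by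
    rw [funext hnorm]
    exact integrable_const_mul_iff (isUnit_iff_ne_zero.2 (pow_ne_zero 2 (norm_ne_zero_iff.2 ha00))) _
  rw [hiff]
  have hpi : (0:ℝ) < π := Real.pi_pos
  have hfε : ∀ r, 0 ≤ t * f r ^ ε₁ := fun r => mul_nonneg ht.le (Real.rpow_nonneg (hfpos r).le _)
  constructor
  · intro hint
    by_contra hne
    rcases Ne.lt_or_gt hne with hlt | hlt
    · -- n < m : no decay at -∞
      have hnle : (n:ℝ) ≤ (m:ℝ) - 1 := by
        have : (n:ℤ) + 1 ≤ m := hlt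
        have : ((n:ℤ) + 1 : ℝ) ≤ (m:ℝ) := by exact_mod_cast this
        push_cast at this; linarith
      have hGe : ∀ r : ℝ, r ≤ (m:ℝ) - 1 →
          Real.exp (2 * G ((m:ℝ) - 1)) ≤ Real.exp (2 * G r) := by
        intro r hr
        have hgle : ∀ s ∈ Icc r ((m:ℝ)-1), g s ≤ 0 := by
          intro s hs
          have hρs : ρ s = (m:ℝ) - 1/2 := hρneg s (by linarith [hs.2])
          have h2 : (n:ℝ) - ρ s ≤ 0 := by rw [hρs]; linarith
          have h1 : 0 ≤ 2 * π * (1 + t * f s ^ ε₁) := by nlinarith [hfε s]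
          exact mul_nonpos_of_nonneg_of_nonpos h1 h2
        have hint0 : (∫ s in r..((m:ℝ)-1), g s) ≤ ∫ s in r..((m:ℝ)-1), (0:ℝ) :=
          intervalIntegral.integral_mono_on hr (hgcont.intervalIntegrable _ _)
            intervalIntegrable_const hgle
        simp only [intervalIntegral.integral_zero] at hint0
        have h := hGsplit r ((m:ℝ)-1)
        exact Real.exp_le_exp.2 (by linarith)
      have hmlt := hint.measure_ge_lt_top (Real.exp_pos (2 * G ((m:ℝ)-1)))
      have hsub : Iic ((m:ℝ)-1) ⊆
          {x | Real.exp (2 * G ((m:ℝ)-1)) ≤ (fun r => Real.exp (2 * G r)) x} :=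
        fun x hx => hGe x hx
      have hmm := measure_mono (μ := volume) hsub
      rw [Real.volume_Iic] at hmm
      exact absurd (lt_of_le_of_lt hmm hmlt) (lt_irrefl _)
    · -- m < n : no decay at +∞
      have hnge : (m:ℝ) + 1 ≤ (n:ℝ) := by
        have : (m:ℤ) + 1 ≤ n := hlt
        exact_mod_cast this
      have hGe : ∀ r : ℝ, (m:ℝ) + 1 ≤ r →
          Real.exp (2 * G ((m:ℝ) + 1)) ≤ Real.exp (2 * G r) := by
        intro r hr
        have hgge : ∀ s ∈ Icc ((m:ℝ)+1) r, 0 ≤ g s := by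
          intro s hs
          have hρs : ρ s = (m:ℝ) + 1/2 := hρpos s (by linarith [hs.1])
          have h2 : 0 ≤ (n:ℝ) - ρ s := by rw [hρs]; linarith
          have h1 : 0 ≤ 2 * π * (1 + t * f s ^ ε₁) := by nlinarith [hfε s]
          exact mul_nonneg h1 h2
        have hint0 : 0 ≤ ∫ s in ((m:ℝ)+1)..r, g s :=
          intervalIntegral.integral_nonneg hr hgge
        have h := hGsplit ((m:ℝ)+1) r
        exact Real.exp_le_exp.2 (by linarith)
      have hmlt := hint.measure_ge_lt_top (Real.exp_pos (2 * G ((m:ℝ)+1)))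
      have hsub : Ici ((m:ℝ)+1) ⊆
          {x | Real.exp (2 * G ((m:ℝ)+1)) ≤ (fun r => Real.exp (2 * G r)) x} :=
        fun x hx => hGe x hx
      have hmm := measure_mono (μ := volume) hsub
      rw [Real.volume_Ici] at hmm
      exact absurd (lt_of_le_of_lt hmm hmlt) (lt_irrefl _)
  · intro hnm
    subst hnm
    set L : ℝ := (n:ℝ) - 1 with hL_def
    set R : ℝ := (n:ℝ) + 1 with hR_def
    have hcont : Continuous fun r => Real.exp (2 * G r) :=
      Real.continuous_exp.comp (continuous_const.mul hGc)
    -- decay on the right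
    have hGR : ∀ r : ℝ, R ≤ r → G r ≤ G R - π * (r - R) := by
      intro r hr
      have hgle : ∀ s ∈ Icc R r, g s ≤ -π := by
        intro s hs
        have hρs : ρ s = (n:ℝ) + 1/2 := hρpos s (by simp only [hR_def] at hs; linarith [hs.1])
        have : g s = 2 * π * (1 + t * f s ^ ε₁) * ((n:ℝ) - ρ s) := rfl
        rw [this, hρs]
        nlinarith [hfε s]
      have hmono : (∫ s in R..r, g s) ≤ ∫ s in R..r, (-π : ℝ) :=
        intervalIntegral.integral_mono_on hr (hgcont.intervalIntegrable _ _)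
          (intervalIntegrable_const) hgle
      rw [intervalIntegral.integral_const, smul_eq_mul] at hmono
      have h := hGsplit R r
      have : (r - R) * (-π) = -(π * (r - R)) := by ring
      rw [this] at hmono
      linarith
    -- decay on the left
    have hGL : ∀ r : ℝ, r ≤ L → G r ≤ G L - π * (L - r) := by
      intro r hr
      have hgge : ∀ s ∈ Icc r L, (π : ℝ) ≤ g s := by
        intro s hs
        have hρs : ρ s = (n:ℝ) - 1/2 := hρneg s (by simp only [hL_def] at hs; linarith [hs.2])
        have : g s = 2 * π * (1 + t * f s ^ ε₁) * ((n:ℝ) - ρ s) := rfl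
        rw [this, hρs]
        nlinarith [hfε s]
      have hmono : (∫ s in r..L, (π : ℝ)) ≤ ∫ s in r..L, g s :=
        intervalIntegral.integral_mono_on hr (intervalIntegrable_const)
          (hgcont.intervalIntegrable _ _) hgge
      rw [intervalIntegral.integral_const, smul_eq_mul] at hmono
      have h := hGsplit r L
      nlinarith
    have h3 : IntegrableOn (fun r => Real.exp (2 * G r)) (Ici R) := by
      have hmaj : IntegrableOn (fun r => Real.exp (2 * G R + 2 * π * R) *
          Real.exp (-(2 * π) * r)) (Ioi R) :=
        (exp_neg_integrableOn_Ioi R (by positivity)).const_mul _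
      rw [integrableOn_Ici_iff_integrableOn_Ioi]
      refine Integrable.mono' hmaj (hcont.aestronglyMeasurable.restrict) ?_
      refine (ae_restrict_iff' measurableSet_Ioi).2 (ae_of_all _ fun x hx => ?_)
      rw [Real.norm_eq_abs, Real.abs_exp, ← Real.exp_add]
      apply Real.exp_le_exp.2
      have := hGR x (le_of_lt hx)
      nlinarith
    have h1 : IntegrableOn (fun r => Real.exp (2 * G r)) (Iic L) := by
      have hmaj : IntegrableOn (fun r => Real.exp (2 * G L - L) * Real.exp r) (Iic L) :=
        (integrableOn_exp_Iic L).const_mul _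
      refine Integrable.mono' hmaj (hcont.aestronglyMeasurable.restrict) ?_
      refine (ae_restrict_iff' measurableSet_Iic).2 (ae_of_all _ fun x hx => ?_)
      rw [Real.norm_eq_abs, Real.abs_exp, ← Real.exp_add]
      apply Real.exp_le_exp.2
      have h := hGL x hx
      have hx' : x ≤ L := hx
      have hπ1 : (1:ℝ) < π := by nlinarith [Real.pi_gt_three]
      nlinarith
    have h2 : IntegrableOn (fun r => Real.exp (2 * G r)) (Icc L R) :=
      hcont.integrableOn_Icc
    have hun : IntegrableOn (fun r => Real.exp (2 * G r)) (Iic L ∪ (Icc L R ∪ Ici R)) :=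
      h1.union (h2.union h3)
    rw [← integrableOn_univ]
    apply hun.mono_set
    intro x _
    rcases le_total x L with h | h
    · exact Or.inl h
    rcases le_total x R with h' | h'
    · exact Or.inr (Or.inl ⟨h, h'⟩)
    · exact Or.inr (Or.inr h')
end

section
/- Fix an integer m, reals s ≥ 0, t ≥ 0, ε₁ ≥ 0, ε₂ ≥ 0, and an integer n. Let b: ℝ → ℂ be a nonzero solution of b'(r) = −2π((1 + t·f(r)^{ε₂})(n − ρ(r)) − s·f(r)^{ε₁}·ρ(r))·b(r), with ρ, f as in the cylinder setup and with (s,t) ≠ (0,0) when relevant signs coincide. If s·(m + 1/2) ≥ 0 and s·(m − 1/2) ≤ 0 fails or t ≥ 0, then for every choice of parameters with s,t not both zero in the degenerate regime, assume specifically s = 0, t ≥ 0: then b ∉ L²(ℝ). -/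
open Real MeasureTheory Set

/-- Negative chirality Fourier-mode equation on the cylinder with s = 0, t ≥ 0:
a nonzero solution of b'(r) = −2π((1 + t f(r)^{ε₂})(n − ρ(r)) − s f(r)^{ε₁}ρ(r))b(r)
is never square-integrable; hence ker_{L²}(D⁻_{0,t,ε₁,0}) = 0. -/
theorem stmt4 (m n : ℤ) (s t ε₁ ε₂ : ℝ) (hs : s = 0) (ht : 0 ≤ t)
    (he1 : 0 ≤ ε₁) (he2 : 0 ≤ ε₂)
    (ρ f : ℝ → ℝ) (hρsm : ContDiff ℝ (⊤ : ℕ∞) ρ) (hρmono : Monotone ρ)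
    (hρneg : ∀ r : ℝ, r < (m : ℝ) - 1/2 → ρ r = (m : ℝ) - 1/2)
    (hρpos : ∀ r : ℝ, (m : ℝ) + 1/2 < r → ρ r = (m : ℝ) + 1/2)
    (hfsm : ContDiff ℝ (⊤ : ℕ∞) f) (hfpos : ∀ r, 0 < f r)
    (hf : ∀ r : ℝ, 1/2 < |r - (m : ℝ)| → f r = |r|)
    (b : ℝ → ℂ) (hd : Differentiable ℝ b) (hb0 : b ≠ 0)
    (hode : ∀ r, deriv b r =
      ((-(2 * π * ((1 + t * f r ^ ε₂) * ((n : ℝ) - ρ r) - s * f r ^ ε₁ * ρ r)) : ℝ) : ℂ) * b r) :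
    ¬ Integrable (fun r => ‖b r‖ ^ 2) := by
  intro hint
  set c : ℝ → ℝ := fun r => -(2 * π * ((1 + t * f r ^ ε₂) * ((n : ℝ) - ρ r) - s * f r ^ ε₁ * ρ r)) with hc
  have hcc : Continuous c := by
    have hf2 : Continuous fun r => f r ^ ε₂ :=
      hfsm.continuous.rpow_const (fun x => Or.inl (hfpos x).ne')
    have hf1 : Continuous fun r => f r ^ ε₁ :=
      hfsm.continuous.rpow_const (fun x => Or.inl (hfpos x).ne')
    exact (continuous_const.mul (((continuous_const.add (continuous_const.mul hf2)).mul
      (continuous_const.sub hρsm.continuous)).sub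
      ((continuous_const.mul hf1).mul hρsm.continuous))).neg
  set F : ℝ → ℝ := fun r => ∫ u in (0:ℝ)..r, c u with hF
  have hFd : ∀ r, HasDerivAt F (c r) r := fun r =>
    (hcc.integral_hasStrictDerivAt 0 r).hasDerivAt
  -- b r = exp (F r) * b 0
  have key : ∀ r, b r = Complex.exp (F r) * b 0 := by
    have hg : ∀ r, deriv (fun r => Complex.exp (-(F r : ℂ)) * b r) r = 0 := by
      intro r
      have h1 : HasDerivAt (fun r => Complex.exp (-(F r : ℂ)))
          (Complex.exp (-(F r : ℂ)) * (-(c r : ℂ))) r := by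
        have : HasDerivAt (fun r => (-(F r : ℂ))) (-(c r : ℂ)) r :=
          (((hFd r).ofReal_comp).neg)
        exact this.cexp
      have h2 : HasDerivAt b (((c r : ℝ) : ℂ) * b r) r := by
        have := (hd r).hasDerivAt
        rwa [hode r] at this
      have := h1.mul h2
      rw [show (fun r => Complex.exp (-(F r : ℂ)) * b r) = ((fun r => Complex.exp (-(F r : ℂ))) * b) from rfl, this.deriv]
      push_cast
      ring
    have hgd : Differentiable ℝ (fun r => Complex.exp (-(F r : ℂ)) * b r) := by
      intro r
      have h1 : HasDerivAt (fun r => (-(F r : ℂ))) (-(c r : ℂ)) r :=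
        (((hFd r).ofReal_comp).neg)
      exact (h1.cexp.mul ((hd r).hasDerivAt)).differentiableAt
    intro r
    have hconst := is_const_of_deriv_eq_zero hgd hg r 0
    have hF0 : F 0 = 0 := by simp [hF]
    rw [hF0] at hconst
    simp at hconst
    have : Complex.exp ((F r : ℂ)) * (Complex.exp (-(F r : ℂ)) * b r)
        = Complex.exp ((F r : ℂ)) * b 0 := by rw [hconst]
    rwa [← mul_assoc, ← Complex.exp_add, add_neg_cancel, Complex.exp_zero, one_mul] at this
  have hb00 : b 0 ≠ 0 := by
    intro h
    apply hb0
    funext r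
    simp [key r, h]
  have hnorm : ∀ r, ‖b r‖ ^ 2 = Real.exp (2 * F r) * ‖b 0‖ ^ 2 := by
    intro r
    have he : ‖Complex.exp ((F r : ℂ))‖ = Real.exp (F r) := by
      rw [Complex.norm_exp]; simp
    rw [key r, norm_mul, he, mul_pow, ← Real.exp_nat_mul]
    norm_num
  -- helper: contradiction from lower bound on a set of infinite measure
  have contra : ∀ (S : Set ℝ), MeasurableSet S → volume S = ⊤ →
      (∀ r ∈ S, F (if n ≤ m then ((m:ℝ)+1) else ((m:ℝ)-1)) ≤ F r) → False := by
    intro S hSm hSv hFb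
    set R : ℝ := if n ≤ m then ((m:ℝ)+1) else ((m:ℝ)-1)
    have hb0p : (0:ℝ) < ‖b 0‖ := norm_pos_iff.2 hb00
    have hκ : (0:ℝ) < Real.exp (2 * F R) * ‖b 0‖ ^ 2 := by
      positivity
    have hi : IntegrableOn (fun r => ‖b r‖ ^ 2) S := hint.integrableOn
    have : Integrable (fun _ : ℝ => Real.exp (2 * F R) * ‖b 0‖ ^ 2) (volume.restrict S) := by
      apply hi.mono' aestronglyMeasurable_const
      · filter_upwards [ae_restrict_mem hSm] with r hr
        rw [hnorm r, Real.norm_eq_abs, abs_of_pos hκ]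
        have : Real.exp (2 * F R) ≤ Real.exp (2 * F r) :=
          Real.exp_le_exp.2 (by linarith [hFb r hr])
        nlinarith [sq_nonneg ‖b 0‖]
    rw [integrable_const_iff] at this
    rcases this with h | h
    · exact absurd h hκ.ne'
    · have h' := h.measure_univ_lt_top
      rw [Measure.restrict_apply_univ, hSv] at h'
      exact absurd h' (by simp)
  have hone : ∀ r, (0:ℝ) ≤ 1 + t * f r ^ ε₂ := by
    intro r
    have := Real.rpow_nonneg (hfpos r).le ε₂
    nlinarith
  by_cases hnm : n ≤ m
  · -- c ≥ 0 on [m+1, ∞), use Ici (m+1)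
    have hcpos : ∀ u : ℝ, (m:ℝ) + 1 ≤ u → 0 ≤ c u := by
      intro u hu
      have hρu : ρ u = (m:ℝ) + 1/2 := hρpos u (by linarith)
      have : (n:ℝ) ≤ (m:ℝ) := by exact_mod_cast hnm
      rw [hc]
      simp only [hs, zero_mul, sub_zero, hρu]
      have h3 : (0:ℝ) ≤ (1 + t * f u ^ ε₂) * (((m:ℝ) + 1/2) - (n:ℝ)) :=
        mul_nonneg (hone u) (by linarith)
      nlinarith [mul_nonneg pi_pos.le h3]
    apply contra (Ici ((m:ℝ)+1)) measurableSet_Ici (by simp)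
    intro r hr
    simp only [if_pos hnm]
    have hle : (m:ℝ) + 1 ≤ r := hr
    have : F r - F ((m:ℝ)+1) = ∫ u in ((m:ℝ)+1)..r, c u := by
      simp only [hF]
      rw [← intervalIntegral.integral_add_adjacent_intervals
        (hcc.intervalIntegrable 0 ((m:ℝ)+1)) (hcc.intervalIntegrable ((m:ℝ)+1) r)]
      ring
    have hnn : 0 ≤ ∫ u in ((m:ℝ)+1)..r, c u :=
      intervalIntegral.integral_nonneg hle (fun u hu => hcpos u hu.1)
    linarith
  · push_neg at hnm
    have hcneg : ∀ u : ℝ, u ≤ (m:ℝ) - 1 → c u ≤ 0 := by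
      intro u hu
      have hρu : ρ u = (m:ℝ) - 1/2 := hρneg u (by linarith)
      have : (m:ℝ) + 1 ≤ (n:ℝ) := by exact_mod_cast hnm
      rw [hc]
      simp only [hs, zero_mul, sub_zero, hρu]
      have h3 : (0:ℝ) ≤ (1 + t * f u ^ ε₂) * ((n:ℝ) - ((m:ℝ) - 1/2)) :=
        mul_nonneg (hone u) (by linarith)
      nlinarith [mul_nonneg pi_pos.le h3]
    have hnm' : ¬ n ≤ m := by exact_mod_cast not_le.2 hnm
    apply contra (Iic ((m:ℝ)-1)) measurableSet_Iic (by simp)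
    intro r hr
    simp only [if_neg hnm']
    have hle : r ≤ (m:ℝ) - 1 := hr
    have : F ((m:ℝ)-1) - F r = ∫ u in r..((m:ℝ)-1), c u := by
      simp only [hF]
      rw [← intervalIntegral.integral_add_adjacent_intervals
        (hcc.intervalIntegrable 0 r) (hcc.intervalIntegrable r ((m:ℝ)-1))]
      ring
    have hnp : (∫ u in r..((m:ℝ)-1), c u) ≤ 0 := by
      have hneg : 0 ≤ ∫ u in r..((m:ℝ)-1), -c u :=
        intervalIntegral.integral_nonneg hle (fun u hu => neg_nonneg.2 (hcneg u hu.2))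
      rw [intervalIntegral.integral_neg] at hneg
      linarith
    linarith
end

section
/- With m = 0, s = 1, t = 0, ε₁ > ε₂ ≥ 0, and ρ, f as in the cylinder setup, for every integer n the solution a_n(r) = exp(2π∫_0^r ((n − ρ(u)) − f(u)^{ε₁}ρ(u))du) lies in L²(ℝ). Hence the L²-kernel of D⁺_{1,0,ε₁,ε₂} on the cylinder over the zero level is infinite dimensional, containing one solution for each Fourier weight n ∈ ℤ. -/
open Real MeasureTheory Set

/-- The m = 0 case of the Braverman perturbation on the cylinder: for every
Fourier weight n ∈ ℤ the solution
a_n(r) = exp(2π∫_0^r ((n − ρ(u)) − f(u)^{ε₁}ρ(u))du) of the mode equation is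
square-integrable on ℝ; hence the L²-kernel of D⁺_{1,0,ε₁,ε₂} contains one
solution for each weight n and is infinite dimensional. -/
theorem stmt9 (ε₁ ε₂ : ℝ) (he : ε₂ < ε₁) (he2 : 0 ≤ ε₂)
    (ρ f : ℝ → ℝ) (hρsm : ContDiff ℝ (⊤ : ℕ∞) ρ) (hρmono : Monotone ρ)
    (hρneg : ∀ r : ℝ, r < -(1/2 : ℝ) → ρ r = -(1/2 : ℝ))
    (hρpos : ∀ r : ℝ, (1/2 : ℝ) < r → ρ r = (1/2 : ℝ))
    (hfsm : ContDiff ℝ (⊤ : ℕ∞) f) (hfpos : ∀ r, 0 < f r)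
    (hf : ∀ r : ℝ, (1/2 : ℝ) < |r| → f r = |r|) :
    ∀ n : ℤ,
      (∀ r : ℝ, HasDerivAt
          (fun x : ℝ => Real.exp (2 * π * ∫ u in (0:ℝ)..x, (((n : ℝ) - ρ u) - f u ^ ε₁ * ρ u)))
          ((2 * π * (((n : ℝ) - ρ r) - f r ^ ε₁ * ρ r)) *
            Real.exp (2 * π * ∫ u in (0:ℝ)..r, (((n : ℝ) - ρ u) - f u ^ ε₁ * ρ u))) r) ∧
      Integrable (fun r : ℝ =>
        Real.exp (2 * π * ∫ u in (0:ℝ)..r, (((n : ℝ) - ρ u) - f u ^ ε₁ * ρ u)) ^ 2) := by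
  have hε₁ : 0 < ε₁ := lt_of_le_of_lt he2 he
  intro n
  set g : ℝ → ℝ := fun u => (((n : ℝ) - ρ u) - f u ^ ε₁ * ρ u) with hg_def
  have hgc : Continuous g := by
    apply Continuous.sub (continuous_const.sub hρsm.continuous)
    exact ((hfsm.continuous.rpow_const (fun x => Or.inl (hfpos x).ne')).mul hρsm.continuous)
  set I : ℝ → ℝ := fun x => ∫ u in (0:ℝ)..x, g u with hI_def
  have hI : ∀ r : ℝ, HasDerivAt I (g r) r := fun r =>
    (hgc.integral_hasStrictDerivAt 0 r).hasDerivAt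
  have hder : ∀ r : ℝ, HasDerivAt (fun x : ℝ => Real.exp (2 * π * I x))
      ((2 * π * g r) * Real.exp (2 * π * I r)) r := by
    intro r
    have h1 : HasDerivAt (fun x => 2 * π * I x) (2 * π * g r) r := (hI r).const_mul _
    have h2 := (Real.hasDerivAt_exp (2 * π * I r)).comp r h1
    exact h2.congr_deriv (by ring)
  refine ⟨hder, ?_⟩
  -- integrability
  have hIc : Continuous I := by
    rw [continuous_iff_continuousAt]; exact fun r => (hI r).continuousAt
  have hFc : Continuous (fun x : ℝ => Real.exp (2 * π * I x) ^ 2) :=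
    ((continuous_const.mul hIc).rexp).pow 2
  have hsq : ∀ a : ℝ, Real.exp a ^ 2 = Real.exp (2 * a) := by
    intro a; rw [sq, ← Real.exp_add]; ring_nf
  set A : ℝ := (2 * (|(n : ℝ)| + 1)) ^ ε₁⁻¹ with hA_def
  have hA0 : 0 ≤ A := Real.rpow_nonneg (by positivity) _
  set R : ℝ := max 1 A with hR_def
  have hR1 : (1 : ℝ) ≤ R := le_max_left _ _
  have hRA : A ≤ R := le_max_right _ _
  have hApow : A ^ ε₁ = 2 * (|(n : ℝ)| + 1) :=
    Real.rpow_inv_rpow (by positivity) hε₁.ne'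
  -- key pointwise bounds
  have hub : ∀ u : ℝ, R ≤ u → g u ≤ -1 := by
    intro u hu
    have hu1 : (1 : ℝ) ≤ u := le_trans hR1 hu
    have hu0 : (0 : ℝ) < u := lt_of_lt_of_le one_pos hu1
    have hρu : ρ u = 1/2 := hρpos u (by linarith)
    have hfu : f u = u := by
      rw [hf u (by rw [abs_of_pos hu0]; linarith), abs_of_pos hu0]
    have hpow : 2 * (|(n : ℝ)| + 1) ≤ u ^ ε₁ := by
      calc 2 * (|(n : ℝ)| + 1) = A ^ ε₁ := hApow.symm
        _ ≤ u ^ ε₁ := Real.rpow_le_rpow hA0 (le_trans hRA hu) hε₁.le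
    have hn : (n : ℝ) ≤ |(n : ℝ)| := le_abs_self _
    simp only [hg_def, hρu, hfu]
    nlinarith [hpow]
  have hlb : ∀ u : ℝ, u ≤ -R → 1 ≤ g u := by
    intro u hu
    have hu1 : u ≤ -1 := le_trans hu (by linarith)
    have hu0 : u < 0 := lt_of_le_of_lt hu1 (by norm_num)
    have hρu : ρ u = -(1/2) := hρneg u (by linarith)
    have hfu : f u = -u := by
      rw [hf u (by rw [abs_of_neg hu0]; linarith), abs_of_neg hu0]
    have hpow : 2 * (|(n : ℝ)| + 1) ≤ (-u) ^ ε₁ := by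
      calc 2 * (|(n : ℝ)| + 1) = A ^ ε₁ := hApow.symm
        _ ≤ (-u) ^ ε₁ := Real.rpow_le_rpow hA0 (by linarith [hRA]) hε₁.le
    have hn : -(n : ℝ) ≤ |(n : ℝ)| := neg_le_abs _
    simp only [hg_def, hρu, hfu]
    nlinarith [hpow]
  -- integral bounds on the two tails
  have hint : ∀ a b : ℝ, IntervalIntegrable g volume a b := fun a b =>
    hgc.intervalIntegrable a b
  have hupper : ∀ x : ℝ, R ≤ x → I x ≤ I R - (x - R) := by
    intro x hx
    have hsplit : I R + ∫ u in R..x, g u = I x :=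
      intervalIntegral.integral_add_adjacent_intervals (hint 0 R) (hint R x)
    have hmono : (∫ u in R..x, g u) ≤ ∫ _u in R..x, (-1 : ℝ) := by
      apply intervalIntegral.integral_mono_on hx (hint R x)
        (intervalIntegrable_const)
      intro u hu
      exact hub u hu.1
    rw [intervalIntegral.integral_const, smul_eq_mul] at hmono
    linarith [hsplit, hmono]
  have hlower : ∀ x : ℝ, x ≤ -R → I x ≤ I (-R) + (x + R) := by
    intro x hx
    have hsplit : I x + ∫ u in x..(-R), g u = I (-R) :=
      intervalIntegral.integral_add_adjacent_intervals (hint 0 x) (hint x (-R))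
    have hmono : (∫ _u in x..(-R), (1 : ℝ)) ≤ ∫ u in x..(-R), g u := by
      apply intervalIntegral.integral_mono_on hx intervalIntegrable_const (hint x (-R))
      intro u hu
      exact hlb u hu.2
    rw [intervalIntegral.integral_const, smul_eq_mul] at hmono
    linarith [hsplit, hmono]
  -- assemble integrability
  have hπ1 : (1 : ℝ) ≤ 4 * π := by nlinarith [Real.pi_gt_three]
  have h2 : IntegrableOn (fun x : ℝ => Real.exp (2 * π * I x) ^ 2) (Ioi R) := by
    have hmaj : IntegrableOn (fun x : ℝ => Real.exp (4 * π * (I R + R)) * Real.exp (-1 * x))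
        (Ioi R) := (exp_neg_integrableOn_Ioi R one_pos).const_mul _
    apply hmaj.mono' (hFc.aestronglyMeasurable.restrict)
    rw [ae_restrict_iff' measurableSet_Ioi]
    filter_upwards with x hx
    have hx' : R ≤ x := le_of_lt hx
    have hx0 : (0 : ℝ) < x := lt_of_lt_of_le (lt_of_lt_of_le one_pos hR1) hx'
    have hIB := hupper x hx'
    rw [Real.norm_eq_abs, abs_of_nonneg (by positivity), hsq, ← Real.exp_add]
    apply Real.exp_le_exp.2
    have : 2 * (2 * π * I x) ≤ 4 * π * (I R + R) - 4 * π * x := by nlinarith [Real.pi_pos]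
    nlinarith [Real.pi_pos]
  have h3 : IntegrableOn (fun x : ℝ => Real.exp (2 * π * I x) ^ 2) (Iio (-R)) := by
    have hmaj : IntegrableOn (fun x : ℝ => Real.exp (4 * π * (I (-R) + R)) * Real.exp x)
        (Iio (-R)) :=
      (((integrableOn_exp_Iic (-R)).mono_set Iio_subset_Iic_self).const_mul _)
    apply hmaj.mono' (hFc.aestronglyMeasurable.restrict)
    rw [ae_restrict_iff' measurableSet_Iio]
    filter_upwards with x hx
    have hx' : x ≤ -R := le_of_lt hx
    have hx0 : x < 0 := lt_of_le_of_lt hx' (by linarith)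
    have hIB := hlower x hx'
    rw [Real.norm_eq_abs, abs_of_nonneg (by positivity), hsq, ← Real.exp_add]
    apply Real.exp_le_exp.2
    have : 2 * (2 * π * I x) ≤ 4 * π * (I (-R) + R) + 4 * π * x := by nlinarith [Real.pi_pos]
    nlinarith [Real.pi_pos]
  have h1 : IntegrableOn (fun x : ℝ => Real.exp (2 * π * I x) ^ 2) (Icc (-R) R) :=
    hFc.integrableOn_Icc
  have hcover : (univ : Set ℝ) = Iio (-R) ∪ (Icc (-R) R ∪ Ioi R) := by
    ext x
    simp only [mem_univ, mem_union, mem_Iio, mem_Icc, mem_Ioi, true_iff]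
    by_cases hx : x < -R
    · exact Or.inl hx
    · push_neg at hx
      by_cases hx2 : x ≤ R
      · exact Or.inr (Or.inl ⟨hx, hx2⟩)
      · exact Or.inr (Or.inr (lt_of_not_ge hx2))
  rw [← integrableOn_univ, hcover]
  exact (h3.union (h1.union h2))
end

section
/- Let g: ℝ → ℝ be continuous such that for some R > 0, c₊ > 0, c₋ > 0, and ε > 0, one has g(r) ≤ −c₊ r^ε for r ≥ R and g(r) ≥ c₋|r|^ε for r ≤ −R. Then every solution of a'(r) = g(r)a(r) lies in L²(ℝ). -/
/-!
Along a solution, `‖a‖²` has derivative `2 g ‖a‖²`, and `2 g ≤ -2 c₊ R^ε` on `[R, ∞)`, so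
`‖a r‖² e^{k r}` with `k = 2 c₊ R^ε` is antitone there: `‖a‖²` decays exponentially at `+∞`.
The same argument applied to `r ↦ a (-r)` gives exponential decay at `-∞`.
-/

open Real MeasureTheory Set Filter Asymptotics

theorem le_mul_exp_of_hasDerivAt_le_neg_mul {f f' : ℝ → ℝ} {k R r : ℝ}
    (hf : ∀ x, HasDerivAt f (f' x) x) (hdecay : ∀ x, R ≤ x → f' x ≤ -k * f x) (hr : R ≤ r) :
    f r ≤ f R * exp (-k * (r - R)) := by
  have hφ : ∀ x, HasDerivAt (fun x => f x * exp (k * x)) ((f' x + k * f x) * exp (k * x)) x :=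
    fun x => ((hf x).mul ((hasDerivAt_id' x).const_mul k).exp).congr_deriv (by ring)
  have hanti : AntitoneOn (fun x => f x * exp (k * x)) (Ici R) := by
    refine antitoneOn_of_deriv_nonpos (convex_Ici R)
      (fun x _ => (hφ x).continuousAt.continuousWithinAt)
      (fun x _ => (hφ x).differentiableAt.differentiableWithinAt) fun x hx => ?_
    rw [interior_Ici] at hx
    rw [(hφ x).deriv]
    exact mul_nonpos_of_nonpos_of_nonneg (by linarith [hdecay x (le_of_lt hx)]) (exp_pos _).le
  have h := hanti self_mem_Ici hr hr
  calc f r = f r * exp (k * r) * exp (-k * r) := by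
        rw [mul_assoc, ← exp_add, show k * r + -k * r = 0 by ring, exp_zero, mul_one]
    _ ≤ f R * exp (k * R) * exp (-k * r) := by gcongr
    _ = f R * exp (-k * (r - R)) := by rw [mul_assoc, ← exp_add]; ring_nf

theorem integrableOn_Ioi_of_hasDerivAt_le_neg_mul {f f' : ℝ → ℝ} {k R : ℝ} (hk : 0 < k)
    (hf : ∀ x, HasDerivAt f (f' x) x) (hf₀ : ∀ x, 0 ≤ f x)
    (hdecay : ∀ x, R ≤ x → f' x ≤ -k * f x) (a : ℝ) : IntegrableOn f (Ioi a) := by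
  refine integrable_of_isBigO_exp_neg hk
    (fun x _ => (hf x).continuousAt.continuousWithinAt) (IsBigO.of_bound (f R * exp (k * R)) ?_)
  filter_upwards [eventually_ge_atTop R] with x hx
  rw [norm_of_nonneg (hf₀ x), norm_of_nonneg (exp_pos _).le, mul_assoc, ← exp_add]
  convert le_mul_exp_of_hasDerivAt_le_neg_mul hf hdecay hx using 3
  ring

theorem integrable_of_integrableOn_Ioi_of_comp_neg {E : Type*} [NormedAddCommGroup E] {f : ℝ → E}
    (hpos : IntegrableOn f (Ioi 0)) (hneg : IntegrableOn (fun x => f (-x)) (Ioi 0)) :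
    Integrable f := by
  rw [← integrableOn_univ, ← Iic_union_Ioi (a := 0), integrableOn_union,
    integrableOn_Iic_iff_integrableOn_Iio]
  refine ⟨?_, hpos⟩
  rw [← neg_zero] at hneg
  simpa only [neg_neg] using hneg.comp_neg_Iio

theorem hasDerivAt_norm_sq_of_hasDerivAt_smul {F : Type*} [NormedAddCommGroup F]
    [InnerProductSpace ℝ F] {a : ℝ → F} {c x : ℝ} (ha : HasDerivAt a (c • a x) x) :
    HasDerivAt (fun x => ‖a x‖ ^ 2) (2 * c * ‖a x‖ ^ 2) x := by
  convert ha.norm_sq using 1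
  rw [real_inner_smul_right, real_inner_self_eq_norm_sq]
  ring

theorem stmt12_general (g : ℝ → ℝ) (R cp cm ε : ℝ)
    (hR : 0 < R) (hcp : 0 < cp) (hcm : 0 < cm) (hε : 0 < ε)
    (hp : ∀ r : ℝ, R ≤ r → g r ≤ -cp * r ^ ε)
    (hmm : ∀ r : ℝ, r ≤ -R → cm * |r| ^ ε ≤ g r)
    (a : ℝ → ℂ) (hd : Differentiable ℝ a)
    (hode : ∀ r, deriv a r = ((g r : ℝ) : ℂ) * a r) :
    Integrable (fun r => ‖a r‖ ^ 2) := by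
  set f : ℝ → ℝ := fun r => ‖a r‖ ^ 2
  have hf : ∀ r, HasDerivAt f (2 * g r * f r) r := fun r =>
    hasDerivAt_norm_sq_of_hasDerivAt_smul (by simpa [Complex.real_smul, hode] using (hd r).hasDerivAt)
  have hf₀ : ∀ r, 0 ≤ f r := fun r => by positivity
  have hRε : 0 < R ^ ε := rpow_pos_of_pos hR ε
  have hdecay : ∀ r, R ≤ r → 2 * g r * f r ≤ -(2 * (cp * R ^ ε)) * f r := by
    intro r hr
    have : cp * R ^ ε ≤ cp * r ^ ε := by gcongr
    nlinarith [hp r hr, hf₀ r]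
  have hdecay_neg : ∀ r, R ≤ r → -(2 * g (-r) * f (-r)) ≤ -(2 * (cm * R ^ ε)) * f (-r) := by
    intro r hr
    have : cm * R ^ ε ≤ cm * |-r| ^ ε := by
      gcongr
      rw [abs_neg, abs_of_pos (hR.trans_le hr)]
      exact hr
    nlinarith [hmm (-r) (by linarith), hf₀ (-r)]
  have hf_neg : ∀ r, HasDerivAt (fun r => f (-r)) (-(2 * g (-r) * f (-r))) r := fun r => by
    simpa [Function.comp_def] using (hf (-r)).comp r (hasDerivAt_neg r)
  exact integrable_of_integrableOn_Ioi_of_comp_neg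
    (integrableOn_Ioi_of_hasDerivAt_le_neg_mul (by positivity) hf hf₀ hdecay 0)
    (integrableOn_Ioi_of_hasDerivAt_le_neg_mul (by positivity)
      hf_neg (fun r => hf₀ (-r)) hdecay_neg 0)

/-- If the coefficient g decays like −c₊r^ε at +∞ and grows like c₋|r|^ε at −∞,
every solution of a' = g·a is square-integrable on ℝ. -/
theorem stmt12 (g : ℝ → ℝ) (hg : Continuous g) (R cp cm ε : ℝ)
    (hR : 0 < R) (hcp : 0 < cp) (hcm : 0 < cm) (hε : 0 < ε)
    (hp : ∀ r : ℝ, R ≤ r → g r ≤ -cp * r ^ ε)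
    (hmm : ∀ r : ℝ, r ≤ -R → cm * |r| ^ ε ≤ g r)
    (a : ℝ → ℂ) (hd : Differentiable ℝ a)
    (hode : ∀ r, deriv a r = ((g r : ℝ) : ℂ) * a r) :
    Integrable (fun r => ‖a r‖ ^ 2) :=
  stmt12_general g R cp cm ε hR hcp hcm hε hp hmm a hd hode
end
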